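/- arXiv:2007.01588 — 3 statements merged into one kernel-verified Lean document; each statement's English description precedes it below -/
import Mathlib

section
/- For every finite rooted tree T, the map χ: |B(T)| → 𝔹(T) sending a point ((B₀ ⊆ B₁ ⊆ … ⊆ B_r), (t₁,…,t_r)) of the realization of the nerve of B(T) (with 1 = t₀ ≥ t₁ ≥ … ≥ t_r ≥ 0) to the weighted bracketing with underlying bracketing B_r in which every bracket of B₀ has weight 1 and every bracket of B_i ∖ B_{i−1} has weight t_i (for 1 ≤ i ≤ r) is a well-defined homeomorphism between the geometric realization of the nerve of the poset B(T) and the cubical space 𝔹(T). -/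
/-- A "pre-tree": finite vertex set with a parent function. -/
structure PreTree where
  V : Type
  parent : V → Option V
  finite : Finite V

attribute [instance] PreTree.finite

def PreTree.IsTree (T : PreTree) : Prop :=
  (∀ v w : T.V, T.parent v = none → T.parent w = none → v = w) ∧
  WellFounded (fun a b : T.V => T.parent a = some b)

def PreTree.IsSubtree (T : PreTree) (S : Set T.V) : Prop :=
  S.Nonempty ∧ ∃ r ∈ S, ∀ v ∈ S, v ≠ r → ∃ p, T.parent v = some p ∧ p ∈ S

def PreTree.IsBracketing (T : PreTree) (B : Set (Set T.V)) : Prop :=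
  (∀ S ∈ B, T.IsSubtree S ∧ S.Nontrivial ∧ S ≠ Set.univ) ∧
  (∀ S₁ ∈ B, ∀ S₂ ∈ B, S₁ ∩ S₂ = S₁ ∨ S₁ ∩ S₂ = S₂ ∨ S₁ ∩ S₂ = ∅)

/-- The poset of bracketings of `T`, ordered by inclusion; as a space it is discrete. -/
def Brkt (T : PreTree) : Type := {B : Set (Set T.V) // T.IsBracketing B}

instance (T : PreTree) : PartialOrder (Brkt T) := by unfold Brkt; infer_instance
instance (T : PreTree) : TopologicalSpace (Brkt T) := ⊥

/-- Extended weights: `tExt t 0 = 1` and `tExt t (i+1) = t i`; a point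
`(t₁ ≥ … ≥ t_r)` of the simplex `Δ^r = {1 = t₀ ≥ t₁ ≥ … ≥ t_r ≥ 0}` assigns the
weight `tExt t i` to the brackets appearing at stage `i` of a chain. -/
def tExt {r : ℕ} (t : Fin r → ℝ) : Fin (r + 1) → ℝ :=
  Fin.cases (motive := fun _ => ℝ) 1 t

/-- Raw points of the realization `|B(T)|`: a chain length `r`, a chain
`c : Fin (r+1) → B(T)` and a weight vector `t ∈ Δ^r`. -/
def PrePtRaw (T : PreTree) : Type :=
  Σ r : ℕ, (Fin (r + 1) → Brkt T) × (Fin r → ℝ)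

/-- Validity: the chain is monotone (`B₀ ⊆ … ⊆ B_r`) and
`1 ≥ t₁ ≥ … ≥ t_r ≥ 0`. -/
def ValidPre (T : PreTree) (p : PrePtRaw T) : Prop :=
  Monotone p.2.1 ∧ (∀ j, p.2.2 j ∈ Set.Icc (0:ℝ) 1) ∧ Antitone p.2.2

/-- The relation generating the simplicial identifications of the realization of the
nerve of `B(T)`: the entry at index `i` of a chain may be deleted (the weights being
transported accordingly) whenever either its barycentric coordinate vanishes (a face
identification: `tExt t i = tExt t (i+1)`, resp. `tExt t i = 0` at the last index) or
it repeats the previous entry (a degeneracy identification). -/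
def RawRel (T : PreTree) (p q : PrePtRaw T) : Prop :=
  ∃ (r : ℕ) (c : Fin (r + 2) → Brkt T) (t : Fin (r + 1) → ℝ) (i : Fin (r + 2)),
    p = ⟨r + 1, c, t⟩ ∧
    q = ⟨r, c ∘ i.succAbove, fun j : Fin r => tExt t (i.succAbove j.succ)⟩ ∧
    ((if h : (i : ℕ) < r + 1 then tExt t i = tExt t ⟨(i : ℕ) + 1, by omega⟩
      else tExt t i = 0) ∨
     (∃ _ : 0 < (i : ℕ), c ⟨(i : ℕ) - 1, by have := i.isLt; omega⟩ = c i))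

def NerveRel (T : PreTree) (p q : {p : PrePtRaw T // ValidPre T p}) : Prop :=
  RawRel T p.1 q.1

/-- The geometric realization `|B(T)|` of the nerve of the poset of bracketings,
as the quotient of the disjoint union of simplices indexed by chains in `B(T)`. -/
def NerveSpace (T : PreTree) : Type := Quot (NerveRel T)

instance (T : PreTree) : TopologicalSpace (PrePtRaw T) := by unfold PrePtRaw; infer_instance
instance (T : PreTree) : TopologicalSpace (NerveSpace T) := by unfold NerveSpace; infer_instance

/-- Raw points of the cubical space `𝔹(T)`: a collection of brackets together with
a weight for each bracket. -/
def CubeRaw (T : PreTree) : Type :=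
  Σ Bs : Set (Set T.V), (↥Bs → ℝ)

/-- Validity: the collection is a bracketing and the weights lie in `[0,1]`. -/
def CubeValid (T : PreTree) (q : CubeRaw T) : Prop :=
  T.IsBracketing q.1 ∧ ∀ s, q.2 s ∈ Set.Icc (0:ℝ) 1

/-- The relation generating `𝔹(T)`: a bracket of weight `0` may be discarded. -/
def CubeRel (T : PreTree) (p q : {q : CubeRaw T // CubeValid T q}) : Prop :=
  ∃ (S₀ : Set T.V) (h₀ : S₀ ∈ p.1.1), p.1.2 ⟨S₀, h₀⟩ = 0 ∧
    q.1.1 = p.1.1 \ {S₀} ∧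
    ∀ (S : Set T.V) (hS : S ∈ q.1.1) (hS' : S ∈ p.1.1), q.1.2 ⟨S, hS⟩ = p.1.2 ⟨S, hS'⟩

/-- The cubical space `𝔹(T)`: the quotient of the disjoint union over all
bracketings `B ∈ B(T)` of the cubes `[0,1]^B` by the identification of weighted
bracketings differing only by brackets of weight `0`. -/
def CubeSpace (T : PreTree) : Type := Quot (CubeRel T)

instance (T : PreTree) : TopologicalSpace (CubeRaw T) := by unfold CubeRaw; infer_instance
instance (T : PreTree) : TopologicalSpace (CubeSpace T) := by unfold CubeSpace; infer_instance

/-- The weight that `χ` assigns to a bracket `S`: `1` if `S ∈ B₀`, and `t_i` if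
`S ∈ B_i ∖ B_{i−1}` — equivalently the largest of the weights `tExt t i` over the
stages `i` at which `S` appears (and `0` if it never appears). -/
noncomputable def chiWeight (T : PreTree) (p : PrePtRaw T) (S : Set T.V) : ℝ :=
  sSup (insert (0:ℝ) {a : ℝ | ∃ i : Fin (p.1 + 1), S ∈ (p.2.1 i).1 ∧ a = tExt p.2.2 i})

/-- The underlying weighted bracketing of the image under `χ` of a point
`(B₀ ⊆ … ⊆ B_r, t)`: the bracketing `B_r` with the weights `chiWeight`. -/
noncomputable def chiRep (T : PreTree) (p : PrePtRaw T) : CubeRaw T :=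
  ⟨(p.2.1 (Fin.last p.1)).1, fun S => chiWeight T p S.1⟩


/-!
Both spaces inject into the functions `Set T.V → ℝ`. A weighted bracketing goes to its weights
extended by `0`, which `CubeRel` does not change; a point `(B₀ ⊆ … ⊆ B_r, t)` of the realization
goes to `chiWeight`, the weight of the first stage containing a bracket, which does not change when
a stage is deleted. Since `χ` commutes with these injections, it is well defined and injective.

Every class has a representative determined by its function. In `𝔹(T)` we drop the brackets of
weight `0`. In `|B(T)|` we delete stages until the chain is strict and the weights are positive and
strictly decreasing. These weights are then `1` and the nonzero values of the function, and the
stages are its superlevel sets at these values. The same superlevel sets also realize any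
`[0,1]`-valued function supported on a bracketing, so `χ` is bijective. Normal chains are
shorter than `#B(T)`, so `|B(T)|` is a finite union of images of compact sets. `𝔹(T)` is
Hausdorff because it injects continuously into `ℝ^(Set T.V)`. Hence the continuous bijection `χ`
is a homeomorphism.
-/

section ChainWeights

variable {T : PreTree}

instance : Finite (Brkt T) := by unfold Brkt; infer_instance

instance : DiscreteTopology (Brkt T) := ⟨rfl⟩

@[simp] lemma tExt_zero {r : ℕ} (t : Fin r → ℝ) : tExt t 0 = 1 := rfl

@[simp] lemma tExt_succ {r : ℕ} (t : Fin r → ℝ) (j : Fin r) : tExt t j.succ = t j := rfl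

lemma tExt_mem_Icc {r : ℕ} {t : Fin r → ℝ} (ht : ∀ j, t j ∈ Set.Icc (0 : ℝ) 1)
    (i : Fin (r + 1)) : tExt t i ∈ Set.Icc (0 : ℝ) 1 := by
  cases i using Fin.cases with
  | zero => simp
  | succ j => exact ht j

lemma tExt_antitone {r : ℕ} {t : Fin r → ℝ} (ht : ∀ j, t j ∈ Set.Icc (0 : ℝ) 1)
    (hanti : Antitone t) : Antitone (tExt t) := by
  refine Fin.antitone_iff_succ_le.mpr fun j => ?_
  cases r with
  | zero => exact j.elim0
  | succ r =>
    cases j using Fin.cases with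
    | zero => exact (ht 0).2
    | succ j => simpa using hanti (Fin.castSucc_le_succ j)

lemma continuous_tExt_apply {r : ℕ} (i : Fin (r + 1)) :
    Continuous fun t : Fin r → ℝ => tExt t i := by
  cases i using Fin.cases with
  | zero => exact continuous_const
  | succ j => exact continuous_apply j

lemma finite_stageWeights (p : PrePtRaw T) (S : Set T.V) :
    {a : ℝ | ∃ i, S ∈ (p.2.1 i).1 ∧ a = tExt p.2.2 i}.Finite :=
  (Set.finite_range (tExt p.2.2)).subset fun _ ⟨i, _, ha⟩ => ⟨i, ha.symm⟩

lemma chiWeight_le_iff {p : PrePtRaw T} {S : Set T.V} {x : ℝ} :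
    chiWeight T p S ≤ x ↔ 0 ≤ x ∧ ∀ i, S ∈ (p.2.1 i).1 → tExt p.2.2 i ≤ x := by
  rw [chiWeight, csSup_le_iff ((finite_stageWeights p S).insert 0).bddAbove
    (Set.insert_nonempty _ _), Set.forall_mem_insert]
  simp only [Set.mem_ofPred_eq, forall_exists_index, and_imp]
  exact and_congr_right fun _ => ⟨fun h i hi => h _ i hi rfl, fun h _ i hi ha => ha ▸ h i hi⟩

lemma chiWeight_nonneg (p : PrePtRaw T) (S : Set T.V) : 0 ≤ chiWeight T p S :=
  (chiWeight_le_iff.mp le_rfl).1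

lemma le_chiWeight_of_mem {p : PrePtRaw T} {S : Set T.V} {i : Fin (p.1 + 1)}
    (hS : S ∈ (p.2.1 i).1) : tExt p.2.2 i ≤ chiWeight T p S :=
  (chiWeight_le_iff.mp le_rfl).2 i hS

lemma chiWeight_eq_zero_or_exists (p : PrePtRaw T) (S : Set T.V) :
    chiWeight T p S = 0 ∨ ∃ i, S ∈ (p.2.1 i).1 ∧ chiWeight T p S = tExt p.2.2 i := by
  exact (Set.insert_nonempty _ _).csSup_mem ((finite_stageWeights p S).insert 0)

lemma chiWeight_mem_Icc {p : PrePtRaw T} (hp : ValidPre T p) (S : Set T.V) :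
    chiWeight T p S ∈ Set.Icc (0 : ℝ) 1 :=
  ⟨chiWeight_nonneg p S, chiWeight_le_iff.mpr ⟨zero_le_one, fun i _ => (tExt_mem_Icc hp.2.1 i).2⟩⟩

lemma chiWeight_eq_zero_of_not_mem_last {p : PrePtRaw T} (hmono : Monotone p.2.1)
    {S : Set T.V} (hS : S ∉ (p.2.1 (Fin.last p.1)).1) : chiWeight T p S = 0 :=
  le_antisymm (chiWeight_le_iff.mpr ⟨le_rfl, fun i hi => absurd (hmono (Fin.le_last i) hi) hS⟩)
    (chiWeight_nonneg p S)

lemma continuous_chiWeight_slice {r : ℕ} (c : Fin (r + 1) → Brkt T) (S : Set T.V) :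
    Continuous fun t : Fin r → ℝ => chiWeight T ⟨r, c, t⟩ S := by
  classical
  have hsup : (fun t : Fin r → ℝ => chiWeight T ⟨r, c, t⟩ S) = fun t => 0 ⊔
      Finset.univ.sup' Finset.univ_nonempty fun i => if S ∈ (c i).1 then tExt t i else 0 := by
    funext t
    refine le_antisymm (chiWeight_le_iff.mpr ⟨le_sup_left, fun i hi => le_sup_of_le_right ?_⟩)
      (sup_le (chiWeight_nonneg _ _) (Finset.sup'_le _ _ fun i _ => ?_))
    · exact Finset.le_sup'_of_le _ (Finset.mem_univ i) (by simp [hi])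
    · split_ifs with hi
      exacts [le_chiWeight_of_mem (p := ⟨r, c, t⟩) hi, chiWeight_nonneg _ _]
  rw [hsup]
  refine continuous_const.sup (Continuous.finset_sup'_apply _ fun i _ => ?_)
  split_ifs
  exacts [continuous_tExt_apply i, continuous_const]

end ChainWeights

section Faces

variable {T : PreTree} {r : ℕ}

def deleteStage (c : Fin (r + 2) → Brkt T) (t : Fin (r + 1) → ℝ) (i : Fin (r + 2)) :
    PrePtRaw T :=
  ⟨r, c ∘ i.succAbove, fun j => tExt t (i.succAbove j.succ)⟩

def IsRemovable (c : Fin (r + 2) → Brkt T) (t : Fin (r + 1) → ℝ) (i : Fin (r + 2)) : Prop :=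
  (∃ k : Fin (r + 1), i = k.castSucc ∧ tExt t k.castSucc = tExt t k.succ) ∨
  (i = Fin.last (r + 1) ∧ tExt t i = 0) ∨
  (∃ k : Fin (r + 1), i = k.succ ∧ c k.castSucc = c k.succ)

lemma rawRel_condition_iff {c : Fin (r + 2) → Brkt T} {t : Fin (r + 1) → ℝ} {i : Fin (r + 2)} :
    ((if h : (i : ℕ) < r + 1 then tExt t i = tExt t ⟨(i : ℕ) + 1, by omega⟩
      else tExt t i = 0) ∨
     (∃ _ : 0 < (i : ℕ), c ⟨(i : ℕ) - 1, by have := i.isLt; omega⟩ = c i)) ↔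
    IsRemovable c t i := by
  obtain ⟨i, hi⟩ := i
  constructor
  · rintro (hface | ⟨hpos, hdeg⟩)
    · split_ifs at hface with hlt
      · exact Or.inl ⟨⟨i, hlt⟩, rfl, hface⟩
      · exact Or.inr (Or.inl ⟨Fin.ext (by simp at hlt ⊢; omega), hface⟩)
    · obtain ⟨m, rfl⟩ : ∃ m, i = m + 1 := ⟨i - 1, by simp at hpos; omega⟩
      exact Or.inr (Or.inr ⟨⟨m, by omega⟩, rfl, hdeg⟩)
  · rintro (⟨k, hk, hface⟩ | ⟨hk, hlast⟩ | ⟨k, hk, hdeg⟩)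
    · cases hk
      exact Or.inl (by rwa [dif_pos k.isLt])
    · cases hk
      exact Or.inl (by rwa [dif_neg (by simp)])
    · cases hk
      exact Or.inr ⟨Nat.succ_pos _, hdeg⟩

lemma rawRel_iff {p q : PrePtRaw T} :
    RawRel T p q ↔ ∃ (r : ℕ) (c : Fin (r + 2) → Brkt T) (t : Fin (r + 1) → ℝ) (i : Fin (r + 2)),
      p = ⟨r + 1, c, t⟩ ∧ q = deleteStage c t i ∧ IsRemovable c t i := by
  simp only [RawRel, rawRel_condition_iff]
  rfl

variable {c : Fin (r + 2) → Brkt T} {t : Fin (r + 1) → ℝ} {i : Fin (r + 2)}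

lemma IsRemovable.tExt_deleteStage (h : IsRemovable c t i) (j : Fin (r + 1)) :
    tExt (deleteStage c t i).2.2 j = tExt t (i.succAbove j) := by
  cases j using Fin.cases with
  | succ j => rfl
  | zero =>
    show 1 = tExt t (i.succAbove 0)
    rcases eq_or_ne i 0 with rfl | hi
    · obtain ⟨k, hk, hface⟩ | ⟨hk, -⟩ | ⟨k, hk, -⟩ := h
      · obtain rfl : k = 0 := Fin.castSucc_eq_zero_iff.mp hk.symm
        simpa using hface
      · exact absurd hk.symm Fin.last_pos.ne'
      · exact absurd hk.symm (Fin.succ_ne_zero k)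
    · simp [Fin.succAbove_ne_zero_zero hi]

lemma IsRemovable.eq_zero_or_dominated (h : IsRemovable c t i) (hc : Monotone c)
    (ht : Antitone (tExt t)) :
    tExt t i = 0 ∨ ∃ j, c i ≤ c (i.succAbove j) ∧ tExt t i ≤ tExt t (i.succAbove j) := by
  obtain ⟨k, rfl, hface⟩ | ⟨-, hlast⟩ | ⟨k, rfl, hdeg⟩ := h
  · exact Or.inr ⟨k, by simpa using hc (Fin.castSucc_le_succ k), by simp [hface]⟩
  · exact Or.inl hlast
  · exact Or.inr ⟨k, by simp [hdeg], by simpa using ht (Fin.castSucc_le_succ k)⟩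

lemma validPre_deleteStage (hp : ValidPre T ⟨r + 1, c, t⟩) (i : Fin (r + 2)) :
    ValidPre T (deleteStage c t i) := by
  have hsucc : Monotone fun j : Fin r => i.succAbove j.succ :=
    (Fin.strictMono_succAbove i).monotone.comp (Fin.strictMono_succ).monotone
  exact ⟨hp.1.comp (Fin.strictMono_succAbove i).monotone, fun j => tExt_mem_Icc hp.2.1 _,
    (tExt_antitone hp.2.1 hp.2.2).comp_monotone hsucc⟩

lemma chiWeight_deleteStage (hp : ValidPre T ⟨r + 1, c, t⟩) (h : IsRemovable c t i) :
    chiWeight T (deleteStage c t i) = chiWeight T ⟨r + 1, c, t⟩ := by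
  funext S
  have hkept : ∀ j, S ∈ (c (i.succAbove j)).1 →
      tExt t (i.succAbove j) ≤ chiWeight T (deleteStage c t i) S := fun j hj =>
    h.tExt_deleteStage j ▸ le_chiWeight_of_mem (p := deleteStage c t i) hj
  refine le_antisymm
    (chiWeight_le_iff.mpr ⟨chiWeight_nonneg _ _, fun j hj => ?_⟩)
    (chiWeight_le_iff.mpr ⟨chiWeight_nonneg _ _, fun k hk => ?_⟩)
  · exact h.tExt_deleteStage j ▸ le_chiWeight_of_mem (p := ⟨r + 1, c, t⟩) hj
  · rcases eq_or_ne k i with rfl | hki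
    · rcases h.eq_zero_or_dominated hp.1 (tExt_antitone hp.2.1 hp.2.2) with h0 | ⟨j, hcj, htj⟩
      · exact h0 ▸ chiWeight_nonneg _ _
      · exact htj.trans (hkept j (hcj hk))
    · obtain ⟨j, rfl⟩ := Fin.exists_succAbove_eq hki
      exact hkept j hk

end Faces

lemma chiWeight_eq_of_rawRel {T : PreTree} {p q : PrePtRaw T} (hp : ValidPre T p)
    (h : RawRel T p q) : chiWeight T q = chiWeight T p := by
  obtain ⟨r, c, t, i, rfl, rfl, hi⟩ := rawRel_iff.mp h
  exact chiWeight_deleteStage hp hi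

section Normal

variable {T : PreTree}

def IsNormal (p : PrePtRaw T) : Prop :=
  StrictMono p.2.1 ∧ StrictAnti (tExt p.2.2) ∧ 0 < tExt p.2.2 (Fin.last p.1)

lemma isNormal_of_forall_not_isRemovable {r : ℕ} {c : Fin (r + 2) → Brkt T}
    {t : Fin (r + 1) → ℝ} (hp : ValidPre T ⟨r + 1, c, t⟩) (h : ∀ i, ¬ IsRemovable c t i) :
    IsNormal (⟨r + 1, c, t⟩ : PrePtRaw T) := by
  refine ⟨Fin.strictMono_iff_lt_succ.mpr fun k => ?_, Fin.strictAnti_iff_succ_lt.mpr fun k => ?_,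
    (tExt_mem_Icc hp.2.1 _).1.lt_of_ne fun h0 => h _ (Or.inr (Or.inl ⟨rfl, h0.symm⟩))⟩
  · exact (hp.1 (Fin.castSucc_le_succ k)).lt_of_ne fun hk => h _ (Or.inr (Or.inr ⟨k, rfl, hk⟩))
  · exact (tExt_antitone hp.2.1 hp.2.2 (Fin.castSucc_le_succ k)).lt_of_ne
      fun hk => h _ (Or.inl ⟨k, rfl, hk.symm⟩)

lemma isNormal_of_len_zero (c : Fin 1 → Brkt T) (t : Fin 0 → ℝ) :
    IsNormal (⟨0, c, t⟩ : PrePtRaw T) :=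
  ⟨Subsingleton.strictMono (α := Fin 1) c, Subsingleton.strictAnti (α := Fin 1) (tExt t),
    zero_lt_one⟩

lemma exists_rawRel_of_not_isNormal {p : PrePtRaw T} (hp : ValidPre T p) (hn : ¬ IsNormal p) :
    ∃ q, RawRel T p q ∧ ValidPre T q ∧ q.1 + 1 = p.1 := by
  obtain ⟨_ | r, c, t⟩ := p
  · exact absurd (isNormal_of_len_zero c t) hn
  · obtain ⟨i, hi⟩ : ∃ i, IsRemovable c t i := by
      by_contra! h
      exact hn (isNormal_of_forall_not_isRemovable hp h)
    exact ⟨_, rawRel_iff.mpr ⟨r, c, t, i, rfl, rfl, hi⟩, validPre_deleteStage hp i, rfl⟩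

lemma exists_isNormal_rep (x : {p : PrePtRaw T // ValidPre T p}) :
    ∃ y : {p : PrePtRaw T // ValidPre T p}, IsNormal y.1 ∧
      Quot.mk (NerveRel T) x = Quot.mk (NerveRel T) y ∧ chiWeight T y.1 = chiWeight T x.1 := by
  induction hx : x.1.1 using Nat.strong_induction_on generalizing x with
  | _ n ih =>
  by_cases hn : IsNormal x.1
  · exact ⟨x, hn, rfl, rfl⟩
  obtain ⟨q, hxq, hq, hlen⟩ := exists_rawRel_of_not_isNormal x.2 hn
  obtain ⟨y, hy, hqy, hwy⟩ := ih q.1 (by omega) ⟨q, hq⟩ rfl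
  have hxq' : NerveRel T x ⟨q, hq⟩ := hxq
  exact ⟨y, hy, (Quot.sound hxq').trans hqy, hwy.trans (chiWeight_eq_of_rawRel x.2 hxq)⟩

namespace IsNormal

variable {p : PrePtRaw T}

lemma len_lt_card (hn : IsNormal p) : p.1 < Nat.card (Brkt T) := by
  simpa using Nat.card_le_card_of_injective _ hn.1.injective

lemma mem_iff_le_chiWeight (hp : ValidPre T p) (hn : IsNormal p) (i : Fin (p.1 + 1))
    (S : Set T.V) : S ∈ (p.2.1 i).1 ↔ tExt p.2.2 i ≤ chiWeight T p S := by
  refine ⟨le_chiWeight_of_mem, fun h => ?_⟩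
  have hpos : 0 < tExt p.2.2 i := hn.2.2.trans_le (hn.2.1.antitone (Fin.le_last i))
  obtain h0 | ⟨j, hj, hwj⟩ := chiWeight_eq_zero_or_exists p S
  · linarith
  · exact hp.1 (hn.2.1.le_iff_ge.mp (hwj ▸ h)) hj

lemma range_tExt (hp : ValidPre T p) (hn : IsNormal p) :
    Set.range (tExt p.2.2) = insert 1 (Set.range (chiWeight T p) \ {0}) := by
  refine Set.Subset.antisymm ?_ ?_
  · rintro _ ⟨i, rfl⟩
    cases i using Fin.cases with
    | zero => exact Or.inl rfl
    | succ k =>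
      -- a bracket entering the chain at stage `k + 1` has weight `tExt p.2.2 k.succ`
      obtain ⟨S, hS, hS'⟩ := Set.not_subset.mp (hn.1 Fin.castSucc_lt_succ).not_ge
      have hge := le_chiWeight_of_mem (p := p) hS
      have hle : chiWeight T p S ≤ tExt p.2.2 k.succ := by
        refine chiWeight_le_iff.mpr ⟨(tExt_mem_Icc hp.2.1 _).1, fun j hj => hn.2.1.antitone ?_⟩
        exact Fin.castSucc_lt_iff_succ_le.mp (lt_of_not_ge fun hjk => hS' (hp.1 hjk hj))
      refine Or.inr ⟨⟨S, le_antisymm hle hge⟩, ?_⟩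
      exact (hn.2.2.trans_le (hn.2.1.antitone (Fin.le_last _))).ne'
  · rintro _ (rfl | ⟨⟨S, rfl⟩, hS⟩)
    · exact ⟨0, rfl⟩
    · obtain h0 | ⟨j, -, hj⟩ := chiWeight_eq_zero_or_exists p S
      · exact absurd h0 hS
      · exact ⟨j, hj.symm⟩

lemma eq_of_chiWeight_eq {q : PrePtRaw T} (hp : ValidPre T p) (hq : ValidPre T q)
    (hnp : IsNormal p) (hnq : IsNormal q) (h : chiWeight T p = chiWeight T q) : p = q := by
  obtain ⟨rp, cp, tp⟩ := p
  obtain ⟨rq, cq, tq⟩ := q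
  have hrange : Set.range (tExt tp) = Set.range (tExt tq) := by
    rw [hnp.range_tExt hp, hnq.range_tExt hq, h]
  obtain rfl : rp = rq := by
    have hcard := congrArg (fun s : Set ℝ => Nat.card s) hrange
    rwa [Nat.card_range_of_injective hnp.2.1.injective,
      Nat.card_range_of_injective hnq.2.1.injective, Nat.card_fin, Nat.card_fin,
      add_left_inj] at hcard
  obtain rfl : tp = tq := funext fun j => congrFun ((hnp.2.1.range_inj hnq.2.1).mp hrange) j.succ
  obtain rfl : cp = cq := funext fun i => Subtype.ext <| Set.ext fun S =>
    (hnp.mem_iff_le_chiWeight hp i S).trans <| by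
      rw [h]; exact (hnq.mem_iff_le_chiWeight hq i S).symm
  rfl

end IsNormal

lemma nerve_mk_eq_of_chiWeight_eq (x y : {p : PrePtRaw T // ValidPre T p})
    (h : chiWeight T x.1 = chiWeight T y.1) :
    Quot.mk (NerveRel T) x = Quot.mk (NerveRel T) y := by
  obtain ⟨x', hx', hxx', hwx⟩ := exists_isNormal_rep x
  obtain ⟨y', hy', hyy', hwy⟩ := exists_isNormal_rep y
  rw [hxx', hyy', Subtype.ext (hx'.eq_of_chiWeight_eq x'.2 y'.2 hy' (by rw [hwx, hwy, h]))]

end Normal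

lemma PreTree.IsBracketing.subset {T : PreTree} {B B' : Set (Set T.V)} (h : T.IsBracketing B)
    (hsub : B' ⊆ B) : T.IsBracketing B' :=
  ⟨fun S hS => h.1 S (hsub hS), fun S₁ h₁ S₂ h₂ => h.2 S₁ (hsub h₁) S₂ (hsub h₂)⟩

lemma Finset.exists_strictAnti_fin_range_eq {α : Type*} [LinearOrder α] (s : Finset α)
    (hs : s.Nonempty) : ∃ (r : ℕ) (w : Fin (r + 1) → α), StrictAnti w ∧ Set.range w = s := by
  obtain ⟨r, hr⟩ : ∃ r, s.card = r + 1 := ⟨s.card - 1, by have := hs.card_pos; omega⟩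
  refine ⟨r, s.orderEmbOfFin hr ∘ Fin.rev,
    fun i j hij => (s.orderEmbOfFin hr).strictMono (Fin.rev_lt_rev.mpr hij), ?_⟩
  rw [Fin.rev_involutive.surjective.range_comp, s.range_orderEmbOfFin hr]

lemma exists_tExt_range_eq (W : Finset ℝ) (h1 : 1 ∈ W) (hW : ∀ a ∈ W, a ≤ 1) :
    ∃ (r : ℕ) (t : Fin r → ℝ), StrictAnti (tExt t) ∧ Set.range (tExt t) = W := by
  obtain ⟨r, w, hw, hrange⟩ := W.exists_strictAnti_fin_range_eq ⟨1, h1⟩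
  have hw0 : w 0 = 1 := by
    obtain ⟨k, hk⟩ : (1 : ℝ) ∈ Set.range w := hrange ▸ h1
    refine le_antisymm (hW _ ?_) (hk ▸ hw.antitone (Fin.zero_le k))
    exact Finset.mem_coe.mp (hrange ▸ Set.mem_range_self 0)
  have htw : tExt (fun j => w j.succ) = w := funext fun i => by
    cases i using Fin.cases <;> simp [hw0]
  exact ⟨r, fun j => w j.succ, htw ▸ hw, htw ▸ hrange⟩

section Levels

variable {T : PreTree}

lemma chiWeight_eq_of_superlevel {p : PrePtRaw T} {f : Set T.V → ℝ} (hf : ∀ S, 0 ≤ f S)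
    (hlevel : ∀ i S, S ∈ (p.2.1 i).1 ↔ tExt p.2.2 i ≤ f S)
    (hvalues : ∀ S, f S ≠ 0 → f S ∈ Set.range (tExt p.2.2)) : chiWeight T p = f := by
  funext S
  refine le_antisymm (chiWeight_le_iff.mpr ⟨hf S, fun i hi => (hlevel i S).mp hi⟩) ?_
  rcases eq_or_ne (f S) 0 with h0 | h0
  · exact h0 ▸ chiWeight_nonneg p S
  · obtain ⟨i, hi⟩ := hvalues S h0
    exact hi ▸ le_chiWeight_of_mem ((hlevel i S).mpr hi.le)

lemma exists_chiWeight_eq {f : Set T.V → ℝ} (hf : ∀ S, f S ∈ Set.Icc (0 : ℝ) 1)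
    (hsupp : T.IsBracketing {S | f S ≠ 0}) :
    ∃ x : {p : PrePtRaw T // ValidPre T p}, chiWeight T x.1 = f := by
  set W : Finset ℝ := insert 1 (Set.range f \ {0}).toFinite.toFinset
  have hW : ∀ a ∈ W, 0 < a ∧ a ≤ 1 := by
    simp only [W, Finset.mem_insert, Set.Finite.mem_toFinset]
    rintro _ (rfl | ⟨⟨S, rfl⟩, hS⟩)
    exacts [⟨zero_lt_one, le_rfl⟩, ⟨(hf S).1.lt_of_ne (Ne.symm hS), (hf S).2⟩]
  obtain ⟨r, t, ht, hrange⟩ := exists_tExt_range_eq W (Finset.mem_insert_self _ _)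
    fun a ha => (hW a ha).2
  have htW : ∀ i, tExt t i ∈ W := fun i => Finset.mem_coe.mp (hrange ▸ Set.mem_range_self i)
  let c : Fin (r + 1) → Brkt T := fun i =>
    ⟨{S | tExt t i ≤ f S}, hsupp.subset fun S hS => ((hW _ (htW i)).1.trans_le hS).ne'⟩
  have hvalid : ValidPre T ⟨r, c, t⟩ :=
    ⟨fun i j hij S hS => (ht.antitone hij).trans hS,
      fun j => ⟨(hW _ (htW j.succ)).1.le, (hW _ (htW j.succ)).2⟩,
      fun i j hij => ht.antitone (Fin.succ_le_succ_iff.mpr hij)⟩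
  refine ⟨⟨⟨r, c, t⟩, hvalid⟩, chiWeight_eq_of_superlevel (fun S => (hf S).1)
    (fun i S => Iff.rfl) fun S hS => ?_⟩
  show f S ∈ Set.range (tExt t)
  rw [hrange]
  simp [W, hS]

end Levels

section Cube

variable {T : PreTree}

namespace CubeRaw

open Classical in
noncomputable def weight (q : CubeRaw T) (S : Set T.V) : ℝ :=
  if h : S ∈ q.1 then q.2 ⟨S, h⟩ else 0

def erase (q : CubeRaw T) (S₀ : Set T.V) : CubeRaw T :=
  ⟨q.1 \ {S₀}, fun S => q.2 ⟨S.1, S.2.1⟩⟩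

lemma weight_of_mem {q : CubeRaw T} {S : Set T.V} (h : S ∈ q.1) : q.weight S = q.2 ⟨S, h⟩ :=
  dif_pos h

lemma weight_of_not_mem {q : CubeRaw T} {S : Set T.V} (h : S ∉ q.1) : q.weight S = 0 :=
  dif_neg h

lemma mem_of_weight_ne_zero {q : CubeRaw T} {S : Set T.V} (h : q.weight S ≠ 0) : S ∈ q.1 :=
  by_contra fun hS => h (weight_of_not_mem hS)

lemma weight_mem_Icc {q : CubeRaw T} (hq : CubeValid T q) (S : Set T.V) :
    q.weight S ∈ Set.Icc (0 : ℝ) 1 := by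
  by_cases hS : S ∈ q.1
  · exact weight_of_mem hS ▸ hq.2 _
  · rw [weight_of_not_mem hS]
    exact ⟨le_rfl, zero_le_one⟩

lemma weight_eq_of_cubeRel {x y : {q : CubeRaw T // CubeValid T q}} (h : CubeRel T x y) :
    y.1.weight = x.1.weight := by
  obtain ⟨S₀, h₀, hw₀, hset, hwts⟩ := h
  funext S
  by_cases hy : S ∈ y.1.1
  · have hx : S ∈ x.1.1 := (hset ▸ hy).1
    rw [weight_of_mem hy, weight_of_mem hx, hwts S hy hx]
  · rw [weight_of_not_mem hy]
    by_cases hx : S ∈ x.1.1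
    · obtain rfl : S = S₀ := by_contra fun hne => hy (hset ▸ ⟨hx, hne⟩)
      rw [weight_of_mem hx, hw₀]
    · rw [weight_of_not_mem hx]

lemma cubeValid_erase {q : CubeRaw T} (hq : CubeValid T q) (S₀ : Set T.V) :
    CubeValid T (q.erase S₀) :=
  ⟨hq.1.subset Set.sdiff_subset, fun _ => hq.2 _⟩

lemma eq_of_weight_eq {x y : CubeRaw T} (hx : ∀ s, x.2 s ≠ 0) (hy : ∀ s, y.2 s ≠ 0)
    (h : x.weight = y.weight) : x = y := by
  have hsupp : ∀ q : CubeRaw T, (∀ s, q.2 s ≠ 0) → {S | q.weight S ≠ 0} = q.1 :=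
    fun q hq => Set.ext fun S =>
      ⟨mem_of_weight_ne_zero, fun hS => by rw [Set.mem_ofPred_eq, weight_of_mem hS]; exact hq _⟩
  obtain ⟨A, f⟩ := x
  obtain ⟨B, g⟩ := y
  obtain rfl : A = B := (hsupp _ hx).symm.trans (h ▸ hsupp _ hy)
  congr
  funext s
  have hs := congrFun h s
  rwa [weight_of_mem (q := ⟨A, f⟩) s.2, weight_of_mem (q := ⟨A, g⟩) s.2] at hs

end CubeRaw

open CubeRaw

lemma exists_rep_weight_ne_zero (x : {q : CubeRaw T // CubeValid T q}) :
    ∃ y : {q : CubeRaw T // CubeValid T q}, Quot.mk (CubeRel T) x = Quot.mk (CubeRel T) y ∧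
      y.1.weight = x.1.weight ∧ ∀ s, y.1.2 s ≠ 0 := by
  induction hx : x.1.1.ncard using Nat.strong_induction_on generalizing x with
  | _ n ih =>
  by_cases hzero : ∀ s, x.1.2 s ≠ 0
  · exact ⟨x, rfl, rfl, hzero⟩
  obtain ⟨⟨S₀, h₀⟩, hw₀⟩ := not_forall_not.mp hzero
  let x' : {q : CubeRaw T // CubeValid T q} := ⟨x.1.erase S₀, cubeValid_erase x.2 S₀⟩
  have hrel : CubeRel T x x' := ⟨S₀, h₀, hw₀, rfl, fun _ _ _ => rfl⟩
  obtain ⟨y, hx'y, hwy, hy⟩ :=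
    ih _ (hx ▸ Set.ncard_sdiff_singleton_lt_of_mem h₀ (Set.toFinite _)) x' rfl
  exact ⟨y, (Quot.sound hrel).trans hx'y, hwy.trans (weight_eq_of_cubeRel hrel), hy⟩

noncomputable def CubeSpace.weight : CubeSpace T → Set T.V → ℝ :=
  Quot.lift (fun x => x.1.weight) fun _ _ h => (weight_eq_of_cubeRel h).symm

lemma CubeSpace.weight_injective : Function.Injective (CubeSpace.weight (T := T)) := by
  rintro ⟨x⟩ ⟨y⟩ h
  obtain ⟨x', hxx', hwx, hx'⟩ := exists_rep_weight_ne_zero x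
  obtain ⟨y', hyy', hwy, hy'⟩ := exists_rep_weight_ne_zero y
  rw [hxx', hyy', Subtype.ext (eq_of_weight_eq hx' hy' (by rw [hwx, hwy]; exact h))]

end Cube

section Topology

variable {T : PreTree}

lemma continuous_chiRep : Continuous (chiRep T) := by
  refine continuous_sigma fun r => continuous_prod_of_discrete_left.mpr fun c => ?_
  exact (continuous_sigmaMk (σ := fun B : Set (Set T.V) => B → ℝ)
    (i := (c (Fin.last r)).1)).comp
    (continuous_pi fun S : (c (Fin.last r)).1 => continuous_chiWeight_slice c S.1)

lemma CubeRaw.continuous_weight : Continuous (CubeRaw.weight (T := T)) := by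
  refine continuous_sigma fun B => continuous_pi fun S => ?_
  by_cases hS : S ∈ B
  · simpa only [CubeRaw.weight, dif_pos hS] using continuous_apply _
  · simpa only [CubeRaw.weight, dif_neg hS] using continuous_const

lemma CubeSpace.continuous_weight : Continuous (CubeSpace.weight (T := T)) :=
  continuous_quot_lift _ (CubeRaw.continuous_weight.comp continuous_subtype_val)

instance : T2Space (CubeSpace T) :=
  .of_injective_continuous CubeSpace.weight_injective CubeSpace.continuous_weight

lemma isCompact_setOf_len_eq (r : ℕ) :
    IsCompact {x : {p : PrePtRaw T // ValidPre T p} | x.1.1 = r} := by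
  rw [Topology.IsEmbedding.subtypeVal.isCompact_iff]
  have himage : Subtype.val '' {x : {p : PrePtRaw T // ValidPre T p} | x.1.1 = r} =
      Sigma.mk r '' ({c | Monotone c} ×ˢ
        (Set.univ.pi (fun _ => Set.Icc (0 : ℝ) 1) ∩ {t | Antitone t})) := by
    ext ⟨r', c, t⟩
    constructor
    · rintro ⟨⟨_, hv⟩, rfl, rfl⟩
      exact ⟨(c, t), ⟨hv.1, fun j _ => hv.2.1 j, hv.2.2⟩, rfl⟩
    · rintro ⟨_, ⟨hc, ht, ha⟩, h⟩
      cases h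
      exact ⟨⟨⟨r, c, t⟩, hc, fun j => ht j trivial, ha⟩, rfl, rfl⟩
  rw [himage]
  exact ((Set.toFinite _).isCompact.prod ((isCompact_univ_pi fun _ => isCompact_Icc).inter_right
    isClosed_antitone)).image continuous_sigmaMk

instance : CompactSpace (NerveSpace T) := by
  refine ⟨?_⟩
  have huniv : ⋃ r ∈ Set.Iio (Nat.card (Brkt T)),
      Quot.mk (NerveRel T) '' {x : {p : PrePtRaw T // ValidPre T p} | x.1.1 = r} =
      (Set.univ : Set (NerveSpace T)) := by
    refine Set.eq_univ_of_forall fun z => ?_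
    obtain ⟨x⟩ := z
    obtain ⟨y, hy, hxy, -⟩ := exists_isNormal_rep x
    exact Set.mem_biUnion hy.len_lt_card ⟨y, rfl, hxy.symm⟩
  rw [← huniv]
  exact (Set.finite_Iio _).isCompact_biUnion fun r _ =>
    (isCompact_setOf_len_eq r).image continuous_quot_mk

end Topology

section ChiMap

variable {T : PreTree}

open CubeRaw

lemma cubeValid_chiRep {p : PrePtRaw T} (hp : ValidPre T p) : CubeValid T (chiRep T p) :=
  ⟨(p.2.1 (Fin.last p.1)).2, fun S => chiWeight_mem_Icc hp S.1⟩

lemma weight_chiRep {p : PrePtRaw T} (hp : ValidPre T p) :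
    (chiRep T p).weight = chiWeight T p := by
  funext S
  by_cases hS : S ∈ (chiRep T p).1
  · exact weight_of_mem hS
  · rw [weight_of_not_mem hS, chiWeight_eq_zero_of_not_mem_last hp.1 hS]

noncomputable def chiMap (T : PreTree) : NerveSpace T → CubeSpace T :=
  Quot.lift (fun x => Quot.mk (CubeRel T) ⟨chiRep T x.1, cubeValid_chiRep x.2⟩) fun x y h =>
    CubeSpace.weight_injective <| by
      simp only [CubeSpace.weight, weight_chiRep x.2, weight_chiRep y.2,
        chiWeight_eq_of_rawRel x.2 h]

lemma weight_chiMap_mk (x : {p : PrePtRaw T // ValidPre T p}) :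
    (chiMap T (Quot.mk (NerveRel T) x)).weight = chiWeight T x.1 :=
  weight_chiRep x.2

lemma chiMap_injective : Function.Injective (chiMap T) := by
  rintro ⟨x⟩ ⟨y⟩ h
  exact nerve_mk_eq_of_chiWeight_eq x y (by rw [← weight_chiMap_mk, ← weight_chiMap_mk, h])

lemma chiMap_surjective : Function.Surjective (chiMap T) := by
  rintro ⟨y⟩
  obtain ⟨x, hx⟩ := exists_chiWeight_eq (weight_mem_Icc y.2)
    (y.2.1.subset fun _ => mem_of_weight_ne_zero)
  exact ⟨Quot.mk _ x, CubeSpace.weight_injective (by rw [weight_chiMap_mk, hx]; rfl)⟩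

lemma continuous_chiMap : Continuous (chiMap T) :=
  continuous_quot_lift _ <| continuous_quot_mk.comp <|
    (continuous_chiRep.comp continuous_subtype_val).subtype_mk _

end ChiMap

theorem chi_well_defined_homeomorphism_general (T : PreTree) :
    ∃ χ : NerveSpace T ≃ₜ CubeSpace T,
      ∀ p : {p : PrePtRaw T // ValidPre T p},
        ∃ hq : CubeValid T (chiRep T p.1),
          χ (Quot.mk (NerveRel T) p)
            = Quot.mk (CubeRel T) ⟨chiRep T p.1, hq⟩ :=
  ⟨continuous_chiMap.homeoOfEquivCompactToT2
      (f := Equiv.ofBijective _ ⟨chiMap_injective, chiMap_surjective⟩),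
    fun p => ⟨cubeValid_chiRep p.2, rfl⟩⟩

/-- for every finite rooted tree `T`, the map `χ` sending a point
`((B₀ ⊆ … ⊆ B_r), (t₁,…,t_r))` of the realization of the nerve of `B(T)` to the
weighted bracketing with underlying bracketing `B_r`, in which every bracket of `B₀`
has weight `1` and every bracket of `B_i ∖ B_{i−1}` has weight `t_i`, is a
well-defined homeomorphism `|B(T)| ≃ 𝔹(T)`. -/
theorem chi_well_defined_homeomorphism (T : PreTree) (hT : T.IsTree) :
    ∃ χ : NerveSpace T ≃ₜ CubeSpace T,
      ∀ p : {p : PrePtRaw T // ValidPre T p},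
        ∃ hq : CubeValid T (chiRep T p.1),
          χ (Quot.mk (NerveRel T) p)
            = Quot.mk (CubeRel T) ⟨chiRep T p.1, hq⟩ :=
  chi_well_defined_homeomorphism_general T
end

section
/- For every k ≥ 1, the map d(x,y) = 1 − Σ_{j=1}^k μ(I_j(x) ∩ I_j(y)) is a metric on F(k): it is nonnegative and symmetric, satisfies the triangle inequality d(x,z) ≤ d(x,y) + d(y,z), and d(x,y) = 0 if and only if x = y. -/
open MeasureTheory Set
open scoped ENNReal

noncomputable section

abbrev Circle1 := AddCircle (1 : ℝ)

instance : Fact ((0:ℝ) < 1) := ⟨one_pos⟩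

/-- The closed arc which is the image of `[a,b]` in the circle. -/
def IsClosedArc (A : Set Circle1) : Prop :=
  ∃ a b : ℝ, a < b ∧ b ≤ a + 1 ∧ A = (fun s : ℝ => (s : Circle1)) '' Set.Icc a b

def IsFiniteUnionOfArcs (A : Set Circle1) : Prop :=
  ∃ (n : ℕ) (f : Fin n → Set Circle1), (∀ i, IsClosedArc (f i)) ∧ A = ⋃ i, f i

/-- `(z₁; z₂; z₃; z₄)` is a cyclically ordered 4-tuple in the circle. -/
def CyclicallyOrdered4 (z₁ z₂ z₃ z₄ : Circle1) : Prop :=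
  ∃ a b c d : ℝ, a < b ∧ b < c ∧ c < d ∧ d < a + 1 ∧
    (a : Circle1) = z₁ ∧ (b : Circle1) = z₂ ∧ (c : Circle1) = z₃ ∧ (d : Circle1) = z₄

/-- The space `F(k)` of normalized cacti with `k` lobes. -/
structure CactusPartition (k : ℕ) where
  part : Fin k → Set Circle1
  closed' : ∀ j, IsClosed (part j)
  nonempty' : ∀ j, (part j).Nonempty
  arcs' : ∀ j, IsFiniteUnionOfArcs (part j)
  covers : ⋃ j, part j = Set.univ
  disjoint_interiors : ∀ i j, i ≠ j → interior (part i) ∩ interior (part j) = ∅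
  measure_part : ∀ j, volume (part j) = ENNReal.ofReal (1 / k)
  treelike : ¬ ∃ (i j : Fin k) (z₁ z₂ z₃ z₄ : Circle1), i ≠ j ∧
      z₁ ∈ interior (part j) ∧ z₃ ∈ interior (part j) ∧
      z₂ ∈ interior (part i) ∧ z₄ ∈ interior (part i) ∧
      CyclicallyOrdered4 z₁ z₂ z₃ z₄

/-- The image of `[0,t]` in the circle. -/
def arcTo (t : ℝ) : Set Circle1 := (fun s : ℝ => (s : Circle1)) '' Set.Icc 0 t

/-- The canonical representative in `[0,1)` of a point of the circle. -/
def rep01 (z : Circle1) : ℝ := ((AddCircle.equivIco 1 0) z : ℝ)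

lemma rep01_mem (z : Circle1) : rep01 z ∈ Set.Icc (0:ℝ) 1 := by
  have h := ((AddCircle.equivIco 1 0) z).2
  exact ⟨h.1, by have := h.2; simp only [zero_add] at this; exact this.le⟩

/-- The real-valued lift `c̃_x^j(t) = k · μ(I_j(x) ∩ [0,t])` of the `j`-th coordinate
of the cactus map. -/
def cactusCoord {k : ℕ} (x : CactusPartition k) (j : Fin k) (t : ℝ) : ℝ :=
  (k : ℝ) * (volume (x.part j ∩ arcTo t)).toReal

/-- The cactus map `c_x : S¹ → (S¹)^k`. -/
def cactusMap {k : ℕ} (x : CactusPartition k) : Circle1 → Fin k → Circle1 :=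
  fun z j => ((cactusCoord x j (rep01 z) : ℝ) : Circle1)

/-- The metric `d(x,y) = 1 - Σ_j μ(I_j(x) ∩ I_j(y))` on `F(k)`. -/
def cactDist {k : ℕ} (x y : CactusPartition k) : ℝ :=
  1 - ∑ j, (volume (x.part j ∩ y.part j)).toReal

/-- `Mon⁺(I, ∂I)`: continuous strictly increasing self-maps of `[0,1]` fixing `0`
and `1`, regarded as basepoint-preserving self-maps of the circle. -/
structure MonPlus where
  toFun : Set.Icc (0:ℝ) 1 → Set.Icc (0:ℝ) 1
  continuous_toFun : Continuous toFun
  strictMono_toFun : StrictMono toFun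
  map_zero : toFun ⟨0, Set.left_mem_Icc.mpr zero_le_one⟩ = ⟨0, Set.left_mem_Icc.mpr zero_le_one⟩
  map_one : toFun ⟨1, Set.right_mem_Icc.mpr zero_le_one⟩ = ⟨1, Set.right_mem_Icc.mpr zero_le_one⟩

/-- The self-map of the circle induced by an element of `Mon⁺(I, ∂I)`. -/
def MonPlus.circleMap (f : MonPlus) (z : Circle1) : Circle1 :=
  ((f.toFun ⟨rep01 z, rep01_mem z⟩ : ℝ) : Circle1)

/-- `φ(x, f) = c_x ∘ f : S¹ → (S¹)^k`. -/
def phiMap {k : ℕ} (x : CactusPartition k) (f : MonPlus) : Circle1 → Fin k → Circle1 :=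
  fun z => cactusMap x (f.circleMap z)

/-- Partial composition `f ∘_i g` of the coendomorphism operad of the circle. -/
def coendComp {k j : ℕ} (hj : 1 ≤ j) (f : Circle1 → Fin k → Circle1) (i : Fin k)
    (g : Circle1 → Fin j → Circle1) : Circle1 → Fin (k + j - 1) → Circle1 := fun z s =>
  if h1 : (s : ℕ) < (i : ℕ) then f z ⟨s, Nat.lt_trans h1 i.isLt⟩
  else if h2 : (s : ℕ) < (i : ℕ) + j then g (f z i) ⟨(s : ℕ) - (i : ℕ), by omega⟩
  else f z ⟨(s : ℕ) - j + 1, by have := s.isLt; have := i.isLt; omega⟩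

end

/-!
Every lobe has measure `1/k`, so `d(x,y) = Σ_j (μ(I_j(x)) - μ(I_j(x) ∩ I_j(y)))` is a sum of
nonnegative terms, and the triangle inequality holds termwise by inclusion–exclusion:
`μ(A ∩ B) + μ(B ∩ C) ≤ μ(B) + μ(A ∩ C)`. If `d(x,y) = 0`, every `I_j(x) \ I_j(y)` is null.
A finite union of nondegenerate arcs lies in the closure of its interior, and an open null set
is empty, so `I_j(x) ⊆ I_j(y)` because `I_j(y)` is closed; by symmetry `I_j(x) = I_j(y)`.
-/

section ClosureInterior

variable {X Y : Type*} [TopologicalSpace X] [TopologicalSpace Y]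

theorem IsOpenMap.image_subset_closure_interior_image {f : X → Y} (hf : IsOpenMap f)
    (hc : Continuous f) {s : Set X} (hs : s ⊆ closure (interior s)) :
    f '' s ⊆ closure (interior (f '' s)) :=
  calc f '' s ⊆ f '' closure (interior s) := image_mono hs
    _ ⊆ closure (f '' interior s) := image_closure_subset_closure_image hc
    _ ⊆ closure (interior (f '' s)) := closure_mono (hf.image_interior_subset s)

theorem iUnion_subset_closure_interior_iUnion {ι : Sort*} {s : ι → Set X}
    (hs : ∀ i, s i ⊆ closure (interior (s i))) : ⋃ i, s i ⊆ closure (interior (⋃ i, s i)) :=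
  iUnion_subset fun i => (hs i).trans (closure_mono (interior_mono (subset_iUnion s i)))

theorem MeasureTheory.Measure.subset_of_measure_sdiff_eq_zero [MeasurableSpace X]
    (μ : Measure X) [μ.IsOpenPosMeasure] {A B : Set X} (hA : A ⊆ closure (interior A))
    (hB : IsClosed B) (h : μ (A \ B) = 0) : A ⊆ B := by
  have hempty := μ.interior_eq_empty_of_null h
  rw [Set.sdiff_eq, interior_inter, hB.isOpen_compl.interior_eq, ← Set.sdiff_eq,
    Set.sdiff_eq_empty] at hempty
  exact hA.trans (closure_minimal hempty hB)

end ClosureInterior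

theorem MeasureTheory.measureReal_inter_add_inter_le {α : Type*} [MeasurableSpace α]
    (μ : Measure α) [IsFiniteMeasure μ] {A B C : Set α} (hB : MeasurableSet B)
    (hC : MeasurableSet C) : μ.real (A ∩ B) + μ.real (B ∩ C) ≤ μ.real B + μ.real (A ∩ C) := by
  rw [← measureReal_union_add_inter (hB.inter hC)]
  exact add_le_add (measureReal_mono (union_subset inter_subset_right inter_subset_left))
    (measureReal_mono fun t ht => ⟨ht.1.1, ht.2.2⟩)

theorem IsClosedArc.subset_closure_interior {A : Set Circle1} (hA : IsClosedArc A) :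
    A ⊆ closure (interior A) := by
  obtain ⟨a, b, hab, -, rfl⟩ := hA
  refine IsOpenMap.image_subset_closure_interior_image QuotientAddGroup.isOpenMap_coe
    continuous_quotient_mk' ?_
  rw [interior_Icc, closure_Ioo hab.ne]

theorem IsFiniteUnionOfArcs.subset_closure_interior {A : Set Circle1}
    (hA : IsFiniteUnionOfArcs A) : A ⊆ closure (interior A) := by
  obtain ⟨n, f, hf, rfl⟩ := hA
  exact iUnion_subset_closure_interior_iUnion fun i => (hf i).subset_closure_interior

namespace CactusPartition

theorem ext_part {k : ℕ} {x y : CactusPartition k} (h : x.part = y.part) : x = y := by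
  cases x; cases y; cases h; rfl

theorem pos {k : ℕ} (x : CactusPartition k) : 0 < k := by
  refine Nat.pos_of_ne_zero fun hk => ?_
  subst hk
  simpa using x.covers.symm

variable {k : ℕ} (x y : CactusPartition k)

theorem measureReal_part (j : Fin k) : volume.real (x.part j) = 1 / k := by
  rw [measureReal_def, x.measure_part j, ENNReal.toReal_ofReal (by positivity)]

theorem sum_measureReal_part : ∑ j, volume.real (x.part j) = 1 := by
  simp [measureReal_part, x.pos.ne']

theorem part_subset_of_measureReal_inter {j : Fin k}
    (h : volume.real (x.part j ∩ y.part j) = volume.real (x.part j)) : x.part j ⊆ y.part j := by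
  refine volume.subset_of_measure_sdiff_eq_zero (x.arcs' j).subset_closure_interior
    (y.closed' j) ?_
  rw [← measureReal_eq_zero_iff]
  linarith [measureReal_sdiff_add_inter (μ := volume) (s := x.part j) (y.closed' j).measurableSet]

end CactusPartition

section CactDist

variable {k : ℕ} (x y z : CactusPartition k)

theorem cactDist_eq_sum :
    cactDist x y = ∑ j, (volume.real (x.part j) - volume.real (x.part j ∩ y.part j)) := by
  rw [Finset.sum_sub_distrib, x.sum_measureReal_part]
  rfl

theorem cactDist_nonneg : 0 ≤ cactDist x y := by
  rw [cactDist_eq_sum]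
  exact Finset.sum_nonneg fun j _ => sub_nonneg.2 (measureReal_mono inter_subset_left)

theorem cactDist_comm : cactDist x y = cactDist y x := by
  simp only [cactDist, inter_comm]

theorem cactDist_triangle : cactDist x z ≤ cactDist x y + cactDist y z := by
  rw [cactDist_eq_sum, cactDist_eq_sum, cactDist_eq_sum, ← Finset.sum_add_distrib]
  refine Finset.sum_le_sum fun j _ => ?_
  linarith [x.measureReal_part j, y.measureReal_part j, measureReal_inter_add_inter_le volume
    (A := x.part j) (y.closed' j).measurableSet (z.closed' j).measurableSet]

theorem cactDist_self : cactDist x x = 0 := by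
  simp [cactDist_eq_sum]

theorem cactDist_eq_zero_iff : cactDist x y = 0 ↔ x = y := by
  refine ⟨fun h => ?_, fun h => h ▸ cactDist_self x⟩
  rw [cactDist_eq_sum, Finset.sum_eq_zero_iff_of_nonneg
    fun j _ => sub_nonneg.2 (measureReal_mono inter_subset_left)] at h
  have hxy (j : Fin k) : volume.real (x.part j ∩ y.part j) = volume.real (x.part j) := by
    linarith [h j (Finset.mem_univ j)]
  have hyx (j : Fin k) : volume.real (y.part j ∩ x.part j) = volume.real (y.part j) := by
    rw [inter_comm, hxy, x.measureReal_part, y.measureReal_part]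
  exact CactusPartition.ext_part <| funext fun j =>
    (x.part_subset_of_measureReal_inter y (hxy j)).antisymm
      (y.part_subset_of_measureReal_inter x (hyx j))

end CactDist

theorem cactDist_is_metric_general (k : ℕ) :
    (∀ x y : CactusPartition k, 0 ≤ cactDist x y) ∧
    (∀ x y : CactusPartition k, cactDist x y = cactDist y x) ∧
    (∀ x y z : CactusPartition k, cactDist x z ≤ cactDist x y + cactDist y z) ∧
    (∀ x y : CactusPartition k, cactDist x y = 0 ↔ x = y) :=
  ⟨cactDist_nonneg, cactDist_comm, cactDist_triangle, cactDist_eq_zero_iff⟩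

/-- `d(x,y) = 1 − Σ_j μ(I_j(x) ∩ I_j(y))` is a metric on `F(k)`:
nonnegative, symmetric, satisfies the triangle inequality, and vanishes exactly on
the diagonal. -/
theorem cactDist_is_metric (k : ℕ) (hk : 1 ≤ k) :
    (∀ x y : CactusPartition k, 0 ≤ cactDist x y) ∧
    (∀ x y : CactusPartition k, cactDist x y = cactDist y x) ∧
    (∀ x y z : CactusPartition k, cactDist x z ≤ cactDist x y + cactDist y z) ∧
    (∀ x y : CactusPartition k, cactDist x y = 0 ↔ x = y) :=
  cactDist_is_metric_general k
end

section
/- Let k ≥ 1, x ∈ F(k), g ∈ Mon⁺(I,∂I), and 1 ≤ i ≤ k. Then there exist x̃ ∈ F(k) and g̃ ∈ Mon⁺(I,∂I) such that (id × ⋯ × g × ⋯ × id) ∘ c_x = c_{x̃} ∘ g̃ as maps S¹ → (S¹)^k, where on the left-hand side g is applied to the i-th coordinate. Explicitly, if I_i(x) = J₁ ⊔ ⋯ ⊔ J_r with each J_s a closed arc, then x̃ is obtained from x by replacing each J_s by an arc J̃_s of length (1/k)·ℓ(g(J_s)) (shifting the connected components of the complement accordingly), and g̃ is the piecewise-linear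 map canonically identifying I_r(x) with I_r(x̃) for every r. -/
open MeasureTheory Set
open scoped ENNReal

/-!
Write `c = c_x^i`. The element `g̃` is `t ↦ t + (g(c t) - c t) / k`, which is strictly increasing
since `c` is `k`-Lipschitz and non-decreasing. Where `c` is constant, i.e. along every arc of a lobe
`I_j(x)` with `j ≠ i`, `g̃` is a rotation, so it preserves the measure of `I_j(x) ∩ [0,t]`. As the
lobes cover the circle with finite overlaps, `g̃(I_i(x) ∩ [0,t])` then has measure
`g̃ t - (t - c t / k) = g(c t) / k`. Hence `x̃ := g̃(x)` has lobes of measure `1/k`, satisfies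
`c_x̃ ∘ g̃ = c_x` off the `i`-th coordinate and `g ∘ c_x^i` on it, and is tree-like because `g̃`
lifts to an increasing homeomorphism of `ℝ` commuting with `t ↦ t + 1`.
-/

noncomputable section

instance : NullSingletonClass (volume : Measure Circle1) :=
  ⟨fun z => by simpa using AddCircle.volume_closedBall (T := 1) (x := z) 0⟩

lemma rep01_coe {t : ℝ} (ht : t ∈ Ico (0 : ℝ) 1) : rep01 t = t := by
  rw [rep01, AddCircle.equivIco_coe_eq (by simpa using ht)]

lemma coe_rep01 (z : Circle1) : ((rep01 z : ℝ) : Circle1) = z :=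
  (AddCircle.equivIco 1 0).symm_apply_apply z

lemma isClosed_coe_Icc (a b : ℝ) : IsClosed (((↑) : ℝ → Circle1) '' Icc a b) :=
  (isCompact_Icc.image (AddCircle.continuous_mk' 1)).isClosed

lemma volume_coe_Icc {a b : ℝ} (hb : b ≤ a + 1) :
    volume (((↑) : ℝ → Circle1) '' Icc a b) = ENNReal.ofReal (b - a) := by
  have hsub :
      ((↑) : ℝ → Circle1) ⁻¹' (((↑) : ℝ → Circle1) '' Icc a b) ∩ Ioc a (a + 1)
        ⊆ Ioc a b ∪ {a + 1} := by
    rintro u ⟨⟨v, hv, hvu⟩, hu⟩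
    rcases hv.1.eq_or_lt with rfl | hav
    · right
      rw [← AddCircle.coe_add_period] at hvu
      exact ((AddCircle.coe_eq_coe_iff_of_mem_Ioc ⟨by linarith, le_rfl⟩ hu).1 hvu).symm
    · left
      rw [← (AddCircle.coe_eq_coe_iff_of_mem_Ioc ⟨hav, hv.2.trans hb⟩ hu).1 hvu]
      exact ⟨hav, hv.2⟩
  have hsup :
      Ioc a b ⊆ ((↑) : ℝ → Circle1) ⁻¹' (((↑) : ℝ → Circle1) '' Icc a b) ∩ Ioc a (a + 1) :=
    fun u hu => ⟨mem_image_of_mem _ (Ioc_subset_Icc_self hu), hu.1, hu.2.trans hb⟩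
  rw [AddCircle.add_projection_respects_measure 1 a (isClosed_coe_Icc a b).measurableSet,
    ← Real.volume_Ioc]
  refine le_antisymm ((measure_mono hsub).trans ?_) (measure_mono hsup)
  exact (measure_union_le _ _).trans (by simp)

instance (e : Circle1 ≃ₜ Circle1) : NullSingletonClass (volume.map e) :=
  ⟨fun z => by
    rw [Measure.map_apply e.continuous.measurable (measurableSet_singleton z)]
    refine measure_mono_null (fun y hy => ?_) (measure_singleton (e.symm z))
    simp [← show e y = z from hy]⟩

lemma volume_map_symm_apply (e : Circle1 ≃ₜ Circle1) {A : Set Circle1} (hA : MeasurableSet A) :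
    volume.map e.symm A = volume (e '' A) := by
  rw [Measure.map_apply e.symm.continuous.measurable hA, e.preimage_symm]

lemma arcTo_eq (t : ℝ) : arcTo t = ((↑) : ℝ → Circle1) '' Icc 0 t := rfl

lemma arcTo_mono : Monotone arcTo := fun _ _ hst => image_mono (Icc_subset_Icc_right hst)

lemma measurableSet_arcTo (t : ℝ) : MeasurableSet (arcTo t) :=
  (isClosed_coe_Icc 0 t).measurableSet

lemma arcTo_one : arcTo 1 = univ := by
  simpa [arcTo_eq] using AddCircle.coe_image_Icc_eq (1 : ℝ) (0 : ℝ)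

lemma volume_arcTo {t : ℝ} (ht : t ≤ 1) : volume (arcTo t) = ENNReal.ofReal t := by
  simpa [arcTo_eq] using volume_coe_Icc (a := 0) (b := t) (by linarith)

lemma arcTo_subset_union {s t : ℝ} (hs : 0 ≤ s) (hst : s ≤ t) :
    arcTo t ⊆ arcTo s ∪ ((↑) : ℝ → Circle1) '' Icc s t := by
  rw [arcTo_eq, arcTo_eq, ← image_union, Icc_union_Icc_eq_Icc hs hst]

lemma coe_image_Icc_add_intCast (a b : ℝ) (n : ℤ) :
    ((↑) : ℝ → Circle1) '' Icc (a + n) (b + n) = ((↑) : ℝ → Circle1) '' Icc a b := by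
  rw [← image_add_const_Icc, image_image]
  congr! 1 with s
  simp

lemma IsClosedArc.exists_eq_union {A : Set Circle1} (hA : IsClosedArc A) :
    ∃ p q p' q' : ℝ, 0 ≤ p ∧ q ≤ 1 ∧ 0 ≤ p' ∧ q' ≤ 1 ∧
      A = ((↑) : ℝ → Circle1) '' Icc p q ∪ ((↑) : ℝ → Circle1) '' Icc p' q' := by
  obtain ⟨a, b, -, hb, rfl⟩ := hA
  have ha := Int.fract_nonneg a
  have ha' := Int.fract_lt_one a
  rw [← coe_image_Icc_add_intCast a b (-⌊a⌋)]
  push_cast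
  rw [← sub_eq_add_neg, ← sub_eq_add_neg, ← Int.fract]
  rcases le_total (b - ⌊a⌋) 1 with h | h
  · exact ⟨_, _, _, _, ha, h, ha, h, (union_self _).symm⟩
  · refine ⟨Int.fract a, 1, 0, b - ⌊a⌋ - 1, ha, le_rfl, le_rfl, ?_, ?_⟩
    · linarith [Int.floor_le a, Int.fract_add_floor a]
    · rw [← Icc_union_Icc_eq_Icc ha'.le h, image_union,
        ← coe_image_Icc_add_intCast 0 (b - ⌊a⌋ - 1) 1]
      push_cast
      ring_nf

lemma OrderIso.symm_add_one {Φ : ℝ ≃o ℝ} (hΦ : ∀ t, Φ (t + 1) = Φ t + 1) (t : ℝ) :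
    Φ.symm (t + 1) = Φ.symm t + 1 :=
  Φ.symm_apply_eq.2 (by rw [hΦ, Φ.apply_symm_apply])

lemma periodic_coe_comp_of_add_one {Φ : ℝ ≃o ℝ} (hΦ : ∀ t, Φ (t + 1) = Φ t + 1) :
    Function.Periodic (fun t => ((Φ t : ℝ) : Circle1)) 1 := fun t => by
  simp only [hΦ, AddCircle.coe_add_period]

section HomeomorphOfLift

variable (Φ : ℝ ≃o ℝ) (hΦ : ∀ t, Φ (t + 1) = Φ t + 1)

def homeomorphOfLift : Circle1 ≃ₜ Circle1 where
  toFun := (periodic_coe_comp_of_add_one hΦ).lift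
  invFun := (periodic_coe_comp_of_add_one (OrderIso.symm_add_one hΦ)).lift
  left_inv z := by
    induction z using QuotientAddGroup.induction_on with
    | H t => simp
  right_inv z := by
    induction z using QuotientAddGroup.induction_on with
    | H t => simp
  continuous_toFun :=
    ((AddCircle.continuous_mk' 1).comp Φ.continuous).quotient_lift _
  continuous_invFun :=
    ((AddCircle.continuous_mk' 1).comp Φ.symm.continuous).quotient_lift _

@[simp]
lemma homeomorphOfLift_coe (t : ℝ) : homeomorphOfLift Φ hΦ t = Φ t := rfl

lemma homeomorphOfLift_symm :
    (homeomorphOfLift Φ hΦ).symm = homeomorphOfLift Φ.symm (OrderIso.symm_add_one hΦ) := rfl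

lemma homeomorphOfLift_image_coe_Icc (a b : ℝ) :
    homeomorphOfLift Φ hΦ '' (((↑) : ℝ → Circle1) '' Icc a b)
      = ((↑) : ℝ → Circle1) '' Icc (Φ a) (Φ b) := by
  rw [image_image, ← Φ.image_Icc, image_image]
  rfl

lemma IsClosedArc.homeomorphOfLift_image {A : Set Circle1} (hA : IsClosedArc A) :
    IsClosedArc (homeomorphOfLift Φ hΦ '' A) := by
  obtain ⟨a, b, hab, hb, rfl⟩ := hA
  refine ⟨Φ a, Φ b, Φ.strictMono hab, ?_, homeomorphOfLift_image_coe_Icc Φ hΦ a b⟩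
  simpa [hΦ] using Φ.monotone hb

lemma CyclicallyOrdered4.homeomorphOfLift {z₁ z₂ z₃ z₄ : Circle1}
    (h : CyclicallyOrdered4 z₁ z₂ z₃ z₄) :
    CyclicallyOrdered4 (homeomorphOfLift Φ hΦ z₁) (homeomorphOfLift Φ hΦ z₂)
      (homeomorphOfLift Φ hΦ z₃) (homeomorphOfLift Φ hΦ z₄) := by
  obtain ⟨a, b, c, d, hab, hbc, hcd, hda, rfl, rfl, rfl, rfl⟩ := h
  refine ⟨Φ a, Φ b, Φ c, Φ d, Φ.strictMono hab, Φ.strictMono hbc, Φ.strictMono hcd, ?_,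
    rfl, rfl, rfl, rfl⟩
  simpa [hΦ] using Φ.strictMono hda

end HomeomorphOfLift

namespace MonPlus

variable (f : MonPlus)

/-- Constant outside `[0,1]`. -/
def extend : ℝ → ℝ := IccExtend zero_le_one fun s => (f.toFun s : ℝ)

lemma extend_of_mem {t : ℝ} (ht : t ∈ Icc (0 : ℝ) 1) : f.extend t = f.toFun ⟨t, ht⟩ := by
  rw [extend, IccExtend_of_mem]

lemma extend_zero : f.extend 0 = 0 := by
  rw [f.extend_of_mem (left_mem_Icc.2 zero_le_one), f.map_zero]

lemma extend_one : f.extend 1 = 1 := by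
  rw [f.extend_of_mem (right_mem_Icc.2 zero_le_one), f.map_one]

lemma extend_mem (t : ℝ) : f.extend t ∈ Icc (0 : ℝ) 1 := (f.toFun _).2

lemma continuous_extend : Continuous f.extend :=
  (continuous_subtype_val.comp f.continuous_toFun).Icc_extend'

lemma strictMonoOn_extend : StrictMonoOn f.extend (Icc 0 1) := fun s hs t ht hst => by
  rw [f.extend_of_mem hs, f.extend_of_mem ht]
  exact f.strictMono_toFun (Subtype.mk_lt_mk.2 hst)

def liftFun (t : ℝ) : ℝ := ⌊t⌋ + f.extend (Int.fract t)

lemma liftFun_add_one (t : ℝ) : f.liftFun (t + 1) = f.liftFun t + 1 := by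
  simp only [liftFun, Int.floor_add_one, Int.fract_add_one]
  push_cast
  ring

lemma liftFun_eq_extend {t : ℝ} (ht : t ∈ Icc (0 : ℝ) 1) : f.liftFun t = f.extend t := by
  rcases ht.2.eq_or_lt with rfl | h1
  · simp [liftFun, extend_zero, extend_one]
  · simp [liftFun, Int.floor_eq_zero_iff.2 ⟨ht.1, h1⟩, Int.fract_eq_self.2 ⟨ht.1, h1⟩]

lemma liftFun_intCast (n : ℤ) : f.liftFun n = n := by
  simp [liftFun, extend_zero]

lemma strictMono_liftFun : StrictMono f.liftFun := by
  intro s t hst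
  have hfract (u : ℝ) : Int.fract u ∈ Icc (0 : ℝ) 1 :=
    ⟨Int.fract_nonneg u, (Int.fract_lt_one u).le⟩
  rcases (Int.floor_mono hst.le).eq_or_lt with hfl | hfl
  · have : Int.fract s < Int.fract t := by rw [Int.fract, Int.fract, hfl]; linarith
    simpa [liftFun, hfl] using f.strictMonoOn_extend (hfract s) (hfract t) this
  · have h1 : f.extend (Int.fract s) < 1 := f.extend_one ▸
      f.strictMonoOn_extend (hfract s) (right_mem_Icc.2 zero_le_one) (Int.fract_lt_one s)
    have h2 : ((⌊s⌋ : ℤ) : ℝ) + 1 ≤ ⌊t⌋ := by exact_mod_cast hfl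
    simp only [liftFun]
    linarith [(f.extend_mem (Int.fract t)).1]

lemma continuous_liftFun : Continuous f.liftFun := by
  have h : f.liftFun = fun t => t + ((fun s => f.extend s - s) ∘ Int.fract) t := by
    funext t
    simp only [liftFun, Function.comp_apply]
    linarith [Int.floor_add_fract t]
  rw [h]
  refine continuous_id.add (ContinuousOn.comp_fract'' ?_ ?_)
  · exact (f.continuous_extend.sub continuous_id).continuousOn
  · simp [extend_zero, extend_one]

lemma surjective_liftFun : Function.Surjective f.liftFun := by
  intro y
  have := intermediate_value_univ (⌊y⌋ : ℝ) ((⌊y⌋ : ℝ) + 1) f.continuous_liftFun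
  rw [← Int.cast_one, ← Int.cast_add, liftFun_intCast, liftFun_intCast] at this
  push_cast at this
  exact this ⟨Int.floor_le y, (Int.lt_floor_add_one y).le⟩

def liftIso : ℝ ≃o ℝ :=
  StrictMono.orderIsoOfSurjective f.liftFun f.strictMono_liftFun f.surjective_liftFun

lemma liftIso_add_one (t : ℝ) : f.liftIso (t + 1) = f.liftIso t + 1 := f.liftFun_add_one t

def toHomeomorph : Circle1 ≃ₜ Circle1 := homeomorphOfLift f.liftIso f.liftIso_add_one

lemma circleMap_eq_toHomeomorph : f.circleMap = f.toHomeomorph := by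
  funext z
  conv_rhs => rw [← coe_rep01 z]
  have hz := rep01_mem z
  rw [MonPlus.circleMap, toHomeomorph, homeomorphOfLift_coe]
  change ((f.toFun ⟨rep01 z, hz⟩ : ℝ) : Circle1) = (f.liftFun (rep01 z) : Circle1)
  rw [liftFun_eq_extend _ hz, extend_of_mem _ hz]

lemma toHomeomorph_coe {t : ℝ} (ht : t ∈ Icc (0 : ℝ) 1) : f.toHomeomorph t = f.extend t :=
  congrArg _ (f.liftFun_eq_extend ht)

lemma toHomeomorph_image_arcTo {t : ℝ} (ht : t ∈ Icc (0 : ℝ) 1) :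
    f.toHomeomorph '' arcTo t = arcTo (f.extend t) := by
  rw [arcTo_eq, toHomeomorph, homeomorphOfLift_image_coe_Icc]
  change _ '' Icc (f.liftFun 0) (f.liftFun t) = _
  rw [f.liftFun_eq_extend (left_mem_Icc.2 zero_le_one), f.liftFun_eq_extend ht, extend_zero]
  rfl

lemma circleMap_coe {t : ℝ} (ht : t ∈ Icc (0 : ℝ) 1) : f.circleMap t = f.extend t := by
  rw [circleMap_eq_toHomeomorph, f.toHomeomorph_coe ht]

end MonPlus

def MonPlus.ofStrictMonoOn (u : ℝ → ℝ) (hcont : ContinuousOn u (Icc 0 1))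
    (hmono : StrictMonoOn u (Icc 0 1)) (h0 : u 0 = 0) (h1 : u 1 = 1) : MonPlus where
  toFun t := ⟨u t, by simpa [h0] using hmono.monotoneOn (left_mem_Icc.2 zero_le_one) t.2 t.2.1,
    by simpa [h1] using hmono.monotoneOn t.2 (right_mem_Icc.2 zero_le_one) t.2.2⟩
  continuous_toFun := hcont.domRestrict.subtype_mk _
  strictMono_toFun s t hst := hmono s.2 t.2 hst
  map_zero := Subtype.ext h0
  map_one := Subtype.ext h1

lemma MonPlus.extend_ofStrictMonoOn {u : ℝ → ℝ} (hcont : ContinuousOn u (Icc 0 1))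
    (hmono : StrictMonoOn u (Icc 0 1)) (h0 : u 0 = 0) (h1 : u 1 = 1) {t : ℝ}
    (ht : t ∈ Icc (0 : ℝ) 1) : (MonPlus.ofStrictMonoOn u hcont hmono h0 h1).extend t = u t := by
  rw [MonPlus.extend_of_mem _ ht]
  rfl

namespace CactusPartition

variable {k : ℕ} (x : CactusPartition k)

lemma finite_diff_interior (j : Fin k) : (x.part j \ interior (x.part j)).Finite := by
  obtain ⟨n, f, harc, heq⟩ := x.arcs' j
  choose a b _ _ hf using harc
  refine (finite_iUnion fun m =>
    (finite_singleton (b m : Circle1)).insert (a m : Circle1)).subset ?_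
  rintro z ⟨hz, hzi⟩
  rw [heq] at hz
  obtain ⟨m, hm⟩ := mem_iUnion.1 hz
  rw [hf m] at hm
  obtain ⟨r, hr, rfl⟩ := hm
  refine mem_iUnion.2 ⟨m, ?_⟩
  rcases eq_endpoints_or_mem_Ioo_of_mem_Icc hr with h | h | h
  · exact Or.inl (congrArg _ h)
  · exact Or.inr (congrArg _ h)
  · refine absurd (interior_maximal ?_ (QuotientAddGroup.isOpenMap_coe _ isOpen_Ioo)
      (mem_image_of_mem _ h)) hzi
    rw [heq]
    exact (image_mono Ioo_subset_Icc_self).trans ((hf m).symm.subset.trans (subset_iUnion f m))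

lemma finite_inter {i j : Fin k} (hij : i ≠ j) : (x.part i ∩ x.part j).Finite := by
  refine ((x.finite_diff_interior i).union (x.finite_diff_interior j)).subset ?_
  rintro z ⟨hzi, hzj⟩
  by_cases h : z ∈ interior (x.part i)
  · refine Or.inr ⟨hzj, fun h' => ?_⟩
    simpa [x.disjoint_interiors i j hij] using mem_inter h h'
  · exact Or.inl ⟨hzi, h⟩

lemma measure_eq_sum_inter (μ : Measure Circle1) [NullSingletonClass μ] {A : Set Circle1}
    (hA : MeasurableSet A) : μ A = ∑ l, μ (x.part l ∩ A) := by
  have hA' : A = ⋃ l ∈ (Finset.univ : Finset (Fin k)), x.part l ∩ A := by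
    simp [← iUnion_inter, x.covers]
  conv_lhs => rw [hA']
  refine measure_biUnion_finset₀ (fun l _ m _ hlm => ?_)
    (fun l _ => ((x.closed' l).measurableSet.inter hA).nullMeasurableSet)
  exact measure_mono_null (inter_subset_inter inter_subset_left inter_subset_left)
    ((x.finite_inter hlm).measure_zero μ)

def mapOfLift (Φ : ℝ ≃o ℝ) (hΦ : ∀ t, Φ (t + 1) = Φ t + 1)
    (hvol : ∀ j, volume (homeomorphOfLift Φ hΦ '' x.part j) = ENNReal.ofReal (1 / k)) :
    CactusPartition k where
  part j := homeomorphOfLift Φ hΦ '' x.part j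
  closed' j := (homeomorphOfLift Φ hΦ).isClosed_image.2 (x.closed' j)
  nonempty' j := (x.nonempty' j).image _
  arcs' j := by
    obtain ⟨n, f, harc, heq⟩ := x.arcs' j
    exact ⟨n, fun m => homeomorphOfLift Φ hΦ '' f m,
      fun m => (harc m).homeomorphOfLift_image Φ hΦ, by rw [heq, image_iUnion]⟩
  covers := by
    rw [← image_iUnion, x.covers, image_univ_of_surjective (homeomorphOfLift Φ hΦ).surjective]
  disjoint_interiors i j hij := by
    rw [← Homeomorph.image_interior, ← Homeomorph.image_interior,
      ← image_inter (homeomorphOfLift Φ hΦ).injective, x.disjoint_interiors i j hij,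
      image_empty]
  measure_part := hvol
  treelike := by
    rintro ⟨i, j, z₁, z₂, z₃, z₄, hij, h₁, h₃, h₂, h₄, hcyc⟩
    set H := homeomorphOfLift Φ hΦ
    have hmem {z : Circle1} {l : Fin k} (hz : z ∈ interior (H '' x.part l)) :
        H.symm z ∈ interior (x.part l) := by
      rw [← H.image_interior] at hz
      obtain ⟨w, hw, rfl⟩ := hz
      simpa using hw
    refine x.treelike ⟨i, j, H.symm z₁, H.symm z₂, H.symm z₃, H.symm z₄, hij,
      hmem h₁, hmem h₃, hmem h₂, hmem h₄, ?_⟩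
    rw [homeomorphOfLift_symm]
    exact hcyc.homeomorphOfLift Φ.symm _

variable (j : Fin k)

lemma cactusCoord_mono : Monotone (cactusCoord x j) := fun _ _ hst =>
  mul_le_mul_of_nonneg_left (ENNReal.toReal_mono (measure_ne_top _ _)
    (measure_mono (inter_subset_inter_right _ (arcTo_mono hst)))) (Nat.cast_nonneg k)

lemma cactusCoord_zero : cactusCoord x j 0 = 0 := by
  simp [cactusCoord, measure_mono_null inter_subset_right (volume_arcTo zero_le_one |>.trans
    ENNReal.ofReal_zero)]

lemma cactusCoord_one : cactusCoord x j 1 = 1 := by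
  have hk : (k : ℝ) ≠ 0 := Nat.cast_ne_zero.2 (Fin.pos j).ne'
  rw [cactusCoord, arcTo_one, inter_univ, x.measure_part j, ENNReal.toReal_ofReal (by positivity)]
  field_simp

lemma cactusCoord_mem_Icc (t : ℝ) : cactusCoord x j t ∈ Icc (0 : ℝ) 1 := by
  refine ⟨by unfold cactusCoord; positivity, x.cactusCoord_one j ▸ ?_⟩
  refine mul_le_mul_of_nonneg_left (ENNReal.toReal_mono (measure_ne_top _ _) ?_)
    (Nat.cast_nonneg k)
  exact measure_mono (inter_subset_inter_right _ (by simp [arcTo_one]))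

lemma cactusCoord_le_add {s t : ℝ} (hs : 0 ≤ s) (hst : s ≤ t) :
    cactusCoord x j t ≤
      cactusCoord x j s + k * (volume (x.part j ∩ ((↑) : ℝ → Circle1) '' Icc s t)).toReal := by
  rw [cactusCoord, cactusCoord, ← mul_add,
    ← ENNReal.toReal_add (measure_ne_top _ _) (measure_ne_top _ _)]
  refine mul_le_mul_of_nonneg_left (ENNReal.toReal_mono (by finiteness) ?_) (Nat.cast_nonneg k)
  exact (measure_mono ((inter_subset_inter_right _ (arcTo_subset_union hs hst)).trans
    (inter_union_distrib_left _ _ _).subset)).trans (measure_union_le _ _)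

lemma cactusCoord_sub_le {s t : ℝ} (hs : 0 ≤ s) (hst : s ≤ t) (ht : t ≤ 1) :
    cactusCoord x j t - cactusCoord x j s ≤ k * (t - s) := by
  have h := x.cactusCoord_le_add j hs hst
  have hvol : (volume (x.part j ∩ ((↑) : ℝ → Circle1) '' Icc s t)).toReal ≤ t - s := by
    refine ENNReal.toReal_le_of_le_ofReal (by linarith) ?_
    exact (measure_mono inter_subset_right).trans (volume_coe_Icc (by linarith)).le
  nlinarith [(Nat.cast_nonneg k : (0 : ℝ) ≤ k)]

lemma cactusCoord_eq_of_null {s t : ℝ} (hs : 0 ≤ s) (hst : s ≤ t)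
    (hnull : volume (x.part j ∩ ((↑) : ℝ → Circle1) '' Icc s t) = 0) :
    cactusCoord x j t = cactusCoord x j s :=
  le_antisymm (by simpa [hnull] using x.cactusCoord_le_add j hs hst) (x.cactusCoord_mono j hst)

lemma continuousOn_cactusCoord : ContinuousOn (cactusCoord x j) (Icc 0 1) := by
  refine (LipschitzOnWith.of_le_add_mul (k : NNReal) fun s hs t ht => ?_).continuousOn
  rw [NNReal.coe_natCast, Real.dist_eq]
  rcases le_total s t with hst | hts
  · linarith [x.cactusCoord_mono j hst, (by positivity : (0 : ℝ) ≤ k * |s - t|)]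
  · linarith [x.cactusCoord_sub_le j ht.1 hts hs.2,
      mul_le_mul_of_nonneg_left (le_abs_self (s - t)) (Nat.cast_nonneg k)]

lemma cactusMap_coe {t : ℝ} (ht : t ∈ Icc (0 : ℝ) 1) :
    cactusMap x t j = cactusCoord x j t := by
  rcases ht.2.eq_or_lt with rfl | h1
  · have h1 : ((1 : ℝ) : Circle1) = ((0 : ℝ) : Circle1) := by simp
    rw [cactusMap, h1, rep01_coe ⟨le_rfl, one_pos⟩, cactusCoord_zero, cactusCoord_one, h1]
  · rw [cactusMap, rep01_coe ⟨ht.1, h1⟩]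

end CactusPartition

section Rescaling

open CactusPartition

variable {k : ℕ} (x : CactusPartition k) (g : MonPlus) (i : Fin k)

/-- The paper's `g̃`, on `[0,1]`. -/
def rescalingFun (t : ℝ) : ℝ := t + (g.extend (cactusCoord x i t) - cactusCoord x i t) / k

lemma rescalingFun_zero : rescalingFun x g i 0 = 0 := by
  simp [rescalingFun, cactusCoord_zero, g.extend_zero]

lemma rescalingFun_one : rescalingFun x g i 1 = 1 := by
  simp [rescalingFun, cactusCoord_one, g.extend_one]

lemma continuousOn_rescalingFun : ContinuousOn (rescalingFun x g i) (Icc 0 1) :=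
  continuousOn_id.add (((g.continuous_extend.comp_continuousOn (x.continuousOn_cactusCoord i)).sub
    (x.continuousOn_cactusCoord i)).div_const _)

lemma strictMonoOn_rescalingFun : StrictMonoOn (rescalingFun x g i) (Icc 0 1) := by
  intro s hs t ht hst
  have hk : (0 : ℝ) < k := Nat.cast_pos.2 i.pos
  rcases (x.cactusCoord_mono i hst.le).eq_or_lt with heq | hlt
  · simp only [rescalingFun, heq]
    linarith
  · have hg := g.strictMonoOn_extend (x.cactusCoord_mem_Icc i s) (x.cactusCoord_mem_Icc i t) hlt
    have hsub := x.cactusCoord_sub_le i hs.1 hst.le ht.2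
    have hdiff : rescalingFun x g i t - rescalingFun x g i s
        = (g.extend (cactusCoord x i t) - g.extend (cactusCoord x i s)
          + (k * (t - s) - (cactusCoord x i t - cactusCoord x i s))) / k := by
      simp only [rescalingFun]
      field_simp
      ring
    rw [← sub_pos, hdiff]
    exact div_pos (by linarith) hk

def rescalingMap : MonPlus :=
  .ofStrictMonoOn (rescalingFun x g i) (continuousOn_rescalingFun x g i)
    (strictMonoOn_rescalingFun x g i) (rescalingFun_zero x g i) (rescalingFun_one x g i)

lemma rescalingMap_extend {t : ℝ} (ht : t ∈ Icc (0 : ℝ) 1) :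
    (rescalingMap x g i).extend t = rescalingFun x g i t :=
  MonPlus.extend_ofStrictMonoOn _ _ _ _ ht

lemma rescalingMap_toHomeomorph_eq_add {j : Fin k} (hj : j ≠ i) {p q : ℝ} (hp : 0 ≤ p)
    (hq : q ≤ 1) (hsub : ((↑) : ℝ → Circle1) '' Icc p q ⊆ x.part j) {z : Circle1}
    (hz : z ∈ ((↑) : ℝ → Circle1) '' Icc p q) :
    (rescalingMap x g i).toHomeomorph z = z + ((rescalingFun x g i p - p : ℝ) : Circle1) := by
  obtain ⟨s, hs, rfl⟩ := hz
  have hs01 : s ∈ Icc (0 : ℝ) 1 := ⟨hp.trans hs.1, hs.2.trans hq⟩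
  rw [MonPlus.toHomeomorph_coe _ hs01, rescalingMap_extend _ _ _ hs01, ← AddCircle.coe_add]
  have hnull : volume (x.part i ∩ ((↑) : ℝ → Circle1) '' Icc p s) = 0 :=
    measure_mono_null (inter_subset_inter_right _ ((image_mono (Icc_subset_Icc_right hs.2)).trans
      hsub)) ((x.finite_inter hj.symm).measure_zero _)
  simp only [rescalingFun, x.cactusCoord_eq_of_null i hp hs.1 hnull]
  ring_nf

lemma restrict_map_rescalingMap_symm_of_arc {j : Fin k} (hj : j ≠ i) {p q : ℝ} (hp : 0 ≤ p)
    (hq : q ≤ 1) (hsub : ((↑) : ℝ → Circle1) '' Icc p q ⊆ x.part j) :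
    (volume.map (rescalingMap x g i).toHomeomorph.symm).restrict
        (((↑) : ℝ → Circle1) '' Icc p q) = volume.restrict (((↑) : ℝ → Circle1) '' Icc p q) := by
  ext A hA
  rw [Measure.restrict_apply hA, Measure.restrict_apply hA,
    volume_map_symm_apply _ (hA.inter (isClosed_coe_Icc p q).measurableSet),
    image_congr fun z hz => rescalingMap_toHomeomorph_eq_add x g i hj hp hq hsub hz.2,
    image_add_right, measure_preimage_add_right]

lemma restrict_map_rescalingMap_symm_of_ne {j : Fin k} (hj : j ≠ i) :
    (volume.map (rescalingMap x g i).toHomeomorph.symm).restrict (x.part j)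
      = volume.restrict (x.part j) := by
  obtain ⟨n, f, harc, heq⟩ := x.arcs' j
  choose p q p' q' hp hq hp' hq' hf using fun m => (harc m).exists_eq_union
  rw [heq, Measure.restrict_iUnion_congr]
  intro m
  have hsub : f m ⊆ x.part j := heq ▸ subset_iUnion f m
  rw [hf m] at hsub ⊢
  exact Measure.restrict_union_congr.2
    ⟨restrict_map_rescalingMap_symm_of_arc x g i hj (hp m) (hq m) (union_subset_iff.1 hsub).1,
      restrict_map_rescalingMap_symm_of_arc x g i hj (hp' m) (hq' m) (union_subset_iff.1 hsub).2⟩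

lemma volume_rescalingMap_image_inter_of_ne {j : Fin k} (hj : j ≠ i) {A : Set Circle1}
    (hA : MeasurableSet A) :
    volume ((rescalingMap x g i).toHomeomorph '' (x.part j ∩ A)) = volume (x.part j ∩ A) := by
  have h := congrArg (· A) (restrict_map_rescalingMap_symm_of_ne x g i hj)
  simp only [Measure.restrict_apply hA] at h
  rwa [inter_comm, ← volume_map_symm_apply _ (hA.inter (x.closed' j).measurableSet)]

lemma rescalingFun_mem_Icc {t : ℝ} (ht : t ∈ Icc (0 : ℝ) 1) :
    rescalingFun x g i t ∈ Icc (0 : ℝ) 1 :=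
  rescalingMap_extend x g i ht ▸ (rescalingMap x g i).extend_mem t

lemma volume_rescalingMap_image_inter_arcTo_self {t : ℝ} (ht : t ∈ Icc (0 : ℝ) 1) :
    k * (volume ((rescalingMap x g i).toHomeomorph '' (x.part i ∩ arcTo t))).toReal
      = g.extend (cactusCoord x i t) := by
  set H := (rescalingMap x g i).toHomeomorph
  have hk : (k : ℝ) ≠ 0 := Nat.cast_ne_zero.2 i.pos.ne'
  have hmeas (l : Fin k) : MeasurableSet (x.part l ∩ arcTo t) :=
    (x.closed' l).measurableSet.inter (measurableSet_arcTo t)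
  have hμ := x.measure_eq_sum_inter (volume.map H.symm) (measurableSet_arcTo t)
  have hvol := x.measure_eq_sum_inter volume (measurableSet_arcTo t)
  rw [← Finset.add_sum_erase _ _ (Finset.mem_univ i)] at hμ hvol
  rw [Finset.sum_congr rfl fun l hl => (volume_map_symm_apply H (hmeas l)).trans
      (volume_rescalingMap_image_inter_of_ne x g i (Finset.ne_of_mem_erase hl)
        (measurableSet_arcTo t)),
    volume_map_symm_apply H (measurableSet_arcTo t), volume_map_symm_apply H (hmeas i),
    MonPlus.toHomeomorph_image_arcTo _ ht, rescalingMap_extend x g i ht,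
    volume_arcTo (rescalingFun_mem_Icc x g i ht).2] at hμ
  rw [volume_arcTo ht.2] at hvol
  have hS : ∑ l ∈ Finset.univ.erase i, volume (x.part l ∩ arcTo t) ≠ ⊤ :=
    ENNReal.sum_ne_top.2 fun _ _ => measure_ne_top _ _
  have h1 := congrArg ENNReal.toReal hμ
  have h2 := congrArg ENNReal.toReal hvol
  rw [ENNReal.toReal_ofReal (rescalingFun_mem_Icc x g i ht).1,
    ENNReal.toReal_add (measure_ne_top _ _) hS] at h1
  rw [ENNReal.toReal_ofReal ht.1, ENNReal.toReal_add (measure_ne_top _ _) hS] at h2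
  have h3 : (volume (H '' (x.part i ∩ arcTo t))).toReal
      = rescalingFun x g i t - t + (volume (x.part i ∩ arcTo t)).toReal := by linarith
  rw [h3, rescalingFun, cactusCoord]
  field_simp
  ring

lemma volume_rescalingMap_image_inter_arcTo {t : ℝ} (ht : t ∈ Icc (0 : ℝ) 1) (j : Fin k) :
    k * (volume ((rescalingMap x g i).toHomeomorph '' (x.part j ∩ arcTo t))).toReal
      = if j = i then g.extend (cactusCoord x i t) else cactusCoord x j t := by
  split_ifs with hj
  · subst hj
    exact volume_rescalingMap_image_inter_arcTo_self x g j ht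
  · rw [volume_rescalingMap_image_inter_of_ne x g i hj (measurableSet_arcTo t)]
    rfl

lemma volume_rescalingMap_image_part (j : Fin k) :
    volume ((rescalingMap x g i).toHomeomorph '' x.part j) = ENNReal.ofReal (1 / k) := by
  have h := volume_rescalingMap_image_inter_arcTo x g i (right_mem_Icc.2 zero_le_one) j
  have hk : (k : ℝ) ≠ 0 := Nat.cast_ne_zero.2 i.pos.ne'
  rw [arcTo_one, inter_univ] at h
  rw [← ENNReal.ofReal_toReal (measure_ne_top volume _)]
  congr 1
  split_ifs at h <;> simp only [cactusCoord_one, g.extend_one] at h <;> field_simp <;> linarith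

/-- The paper's `x̃`. -/
def rescaledPartition : CactusPartition k :=
  x.mapOfLift (rescalingMap x g i).liftIso (rescalingMap x g i).liftIso_add_one
    (volume_rescalingMap_image_part x g i)

lemma cactusCoord_rescaledPartition {t : ℝ} (ht : t ∈ Icc (0 : ℝ) 1) (j : Fin k) :
    cactusCoord (rescaledPartition x g i) j (rescalingFun x g i t)
      = if j = i then g.extend (cactusCoord x i t) else cactusCoord x j t := by
  rw [← volume_rescalingMap_image_inter_arcTo x g i ht j, cactusCoord,
    ← rescalingMap_extend x g i ht, ← MonPlus.toHomeomorph_image_arcTo _ ht,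
    image_inter (rescalingMap x g i).toHomeomorph.injective]
  rfl

end Rescaling

end

theorem exists_rescaled_partition_general (k : ℕ)
    (x : CactusPartition k) (g : MonPlus) (i : Fin k) :
    ∃ (x' : CactusPartition k) (g' : MonPlus),
      (∀ (z : Circle1) (j : Fin k),
        (if j = i then g.circleMap (cactusMap x z j) else cactusMap x z j)
          = cactusMap x' (g'.circleMap z) j) ∧
      (∀ r : Fin k, g'.circleMap '' x.part r = x'.part r) := by
  refine ⟨rescaledPartition x g i, rescalingMap x g i, fun z j => ?_, fun r => ?_⟩
  · obtain ⟨t, ht, rfl⟩ : ∃ t ∈ Icc (0 : ℝ) 1, (t : Circle1) = z :=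
      ⟨rep01 z, rep01_mem z, coe_rep01 z⟩
    rw [MonPlus.circleMap_coe _ ht, rescalingMap_extend x g i ht,
      (rescaledPartition x g i).cactusMap_coe j (rescalingFun_mem_Icc x g i ht),
      cactusCoord_rescaledPartition x g i ht, x.cactusMap_coe j ht]
    split_ifs with hj
    · subst hj
      exact g.circleMap_coe (x.cactusCoord_mem_Icc j t)
    · rfl
  · rw [MonPlus.circleMap_eq_toHomeomorph]
    rfl

/-- for `x ∈ F(k)`, `g ∈ Mon⁺(I,∂I)` and `1 ≤ i ≤ k`, there exist
`x̃ ∈ F(k)` and `g̃ ∈ Mon⁺(I,∂I)` with `(id × ⋯ × g × ⋯ × id) ∘ c_x = c_{x̃} ∘ g̃`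
(`g` acting on the `i`-th coordinate); moreover `g̃` canonically identifies each
`I_r(x)` with `I_r(x̃)` (expressed here by `g̃(I_r(x)) = I_r(x̃)` for every `r`). -/
theorem exists_rescaled_partition (k : ℕ) (hk : 1 ≤ k)
    (x : CactusPartition k) (g : MonPlus) (i : Fin k) :
    ∃ (x' : CactusPartition k) (g' : MonPlus),
      (∀ (z : Circle1) (j : Fin k),
        (if j = i then g.circleMap (cactusMap x z j) else cactusMap x z j)
          = cactusMap x' (g'.circleMap z) j) ∧
      (∀ r : Fin k, g'.circleMap '' x.part r = x'.part r) :=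
  exists_rescaled_partition_general k x g i
end
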